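/- Suppose A belongs to the class 𝒜, Φ satisfies condition δ2 and Φ satisfies condition (*). Then for each d ∈ (0,1) and each ε > 0 there exists δ = δ(d,ε) > 0 such that for any x̄, ȳ ∈ l_Φ^A(X) with ρ_Φ^A(x̄) ≤ d and ρ_Φ^A(ȳ) ≤ δ, one has |ρ_Φ^A(x̄ + ȳ) − ρ_Φ^A(x̄)| < ε. -/

import Mathlib

open Filter Topology

/-- An Orlicz function: convex, nondecreasing, continuous on `[0,∞)`,
vanishing at `0`, positive on `(0,∞)`, tending to `∞` at `∞`. -/
structure IsOrliczFn (φ : ℝ → ℝ) : Prop where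
  convexOn : ConvexOn ℝ (Set.Ici (0 : ℝ)) φ
  monotoneOn : MonotoneOn φ (Set.Ici (0 : ℝ))
  continuousOn : ContinuousOn φ (Set.Ici (0 : ℝ))
  map_zero : φ 0 = 0
  pos : ∀ t : ℝ, 0 < t → 0 < φ t
  tendsto_atTop : Filter.Tendsto φ Filter.atTop Filter.atTop

/-- A Musielak-Orlicz function: a sequence of Orlicz functions. -/
def IsMusielakOrlicz (Φ : ℕ → ℝ → ℝ) : Prop := ∀ n, IsOrliczFn (Φ n)

/-- Condition δ₂ for a Musielak-Orlicz function. -/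
def MOCondDelta2 (Φ : ℕ → ℝ → ℝ) : Prop :=
  ∃ K > (0 : ℝ), ∃ δ > (0 : ℝ), ∃ c : ℕ → ℝ, (∀ n, 0 ≤ c n) ∧ Summable c ∧
    ∀ n : ℕ, ∀ x : ℝ, 0 ≤ x → Φ n x ≤ δ → Φ n (2 * x) ≤ K * Φ n x + c n

/-- Condition (*) for a Musielak-Orlicz function. -/
def MOCondStar (Φ : ℕ → ℝ → ℝ) : Prop :=
  ∀ ε : ℝ, ε ∈ Set.Ioo (0 : ℝ) 1 → ∃ δ > (0 : ℝ), ∀ n : ℕ, ∀ u : ℝ, 0 ≤ u →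
    Φ n u < 1 - ε → Φ n ((1 + δ) * u) ≤ 1

/-- The class 𝒜 of infinite matrices: every column is nonzero. -/
def MatrixClassA (a : ℕ → ℕ → ℝ) : Prop := ∀ k, ∃ n, a n k ≠ 0

/-- A triangle matrix: nonzero diagonal, zero above the diagonal. -/
def IsTriangle (a : ℕ → ℕ → ℝ) : Prop := (∀ n, a n n ≠ 0) ∧ ∀ n k, n < k → a n k = 0

/-- The `n`-th row sum `∑_k |a_{nk}| ‖x_k‖`. -/
noncomputable def rowSum {X : Type*} [NormedAddCommGroup X]
    (a : ℕ → ℕ → ℝ) (x : ℕ → X) (n : ℕ) : ℝ :=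
  ∑' k, |a n k| * ‖x k‖

/-- Membership in the generalized Musielak-Orlicz sequence space `l_Φ^A(X)`:
`x` is a bounded sequence whose row sums are finite and
`∑_n φ_n(rowSum_n / σ) < ∞` for some `σ > 0`. -/
def MemL {X : Type*} [NormedAddCommGroup X]
    (Φ : ℕ → ℝ → ℝ) (a : ℕ → ℕ → ℝ) (x : ℕ → X) : Prop :=
  (∃ C : ℝ, ∀ k, ‖x k‖ ≤ C) ∧ (∀ n, Summable fun k => |a n k| * ‖x k‖) ∧
    ∃ σ > (0 : ℝ), Summable fun n => Φ n (rowSum a x n / σ)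

/-- Membership in `h_Φ^A(X)`: as `MemL` but for every `σ > 0`. -/
def MemH {X : Type*} [NormedAddCommGroup X]
    (Φ : ℕ → ℝ → ℝ) (a : ℕ → ℕ → ℝ) (x : ℕ → X) : Prop :=
  (∃ C : ℝ, ∀ k, ‖x k‖ ≤ C) ∧ (∀ n, Summable fun k => |a n k| * ‖x k‖) ∧
    ∀ σ > (0 : ℝ), Summable fun n => Φ n (rowSum a x n / σ)

/-- The Luxemburg-type norm `‖x‖_Φ^A`. -/
noncomputable def ANorm {X : Type*} [NormedAddCommGroup X]
    (Φ : ℕ → ℝ → ℝ) (a : ℕ → ℕ → ℝ) (x : ℕ → X) : ℝ :=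
  sInf {σ : ℝ | 0 < σ ∧ (Summable fun n => Φ n (rowSum a x n / σ)) ∧
    (∑' n, Φ n (rowSum a x n / σ)) ≤ 1}

/-- The modular `ρ_Φ^A(x) = ∑_n φ_n(∑_k |a_{nk}| ‖x_k‖)`. -/
noncomputable def rhoA {X : Type*} [NormedAddCommGroup X]
    (Φ : ℕ → ℝ → ℝ) (a : ℕ → ℕ → ℝ) (x : ℕ → X) : ℝ :=
  ∑' n, Φ n (rowSum a x n)

/-- The `m`-th section of a sequence: first `m` coordinates kept, rest zero. -/
def sect {X : Type*} [Zero X] (x : ℕ → X) (m : ℕ) : ℕ → X :=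
  fun k => if k < m then x k else 0

/-!
Both `ρ(x + y) ≤ ρ(x) + ε` and `ρ(x) ≤ ρ(x + y) + ε` are instances of one estimate for the modular
`I(w) = ∑ φ_n(w_n)` of nonnegative real sequences: if `I(u) ≤ d < 1` and `I(v)` is small enough,
then `I(w) ≤ I(u) + ε` whenever `w ≤ u + v`. It is applied to the row sums of `x, y` and then of
`x + y, y` (with `d` replaced by a slightly larger bound, still `< 1`). By convexity
`φ(u + v) ≤ φ((1 + t)u) + φ((1 + t)v / t)`; δ₂ and (*) together give `I((1 + t)u) ≤ I(u) + ε / 2`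
for small `t`, uniformly on `{I ≤ d}`, and δ₂ alone makes `I(Lv)` small whenever `I(v)` is.
-/

namespace IsOrliczFn

variable {φ : ℝ → ℝ}

theorem nonneg (hφ : IsOrliczFn φ) {t : ℝ} (ht : 0 ≤ t) : 0 ≤ φ t :=
  hφ.map_zero ▸ hφ.monotoneOn (Set.mem_Ici.2 le_rfl) ht ht

theorem mono (hφ : IsOrliczFn φ) {s t : ℝ} (hs : 0 ≤ s) (hst : s ≤ t) : φ s ≤ φ t :=
  hφ.monotoneOn hs (hs.trans hst) hst

theorem map_one_add_mul_le (hφ : IsOrliczFn φ) {u r t : ℝ} (hu : 0 ≤ u) (hr : 0 < r)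
    (ht : 0 ≤ t) (htr : t ≤ r) :
    φ ((1 + t) * u) ≤ φ u + t / r * φ ((1 + r) * u) := by
  have hs : t / r ≤ 1 := (div_le_one hr).2 htr
  have hconv := hφ.convexOn.2 (Set.mem_Ici.2 hu) (Set.mem_Ici.2 (by positivity : 0 ≤ (1 + r) * u))
    (sub_nonneg.2 hs) (by positivity) (sub_add_cancel _ _)
  have harg : (1 - t / r) • u + (t / r) • ((1 + r) * u) = (1 + t) * u := by
    simp only [smul_eq_mul]; field_simp; ring
  rw [harg, smul_eq_mul, smul_eq_mul] at hconv
  nlinarith [hφ.nonneg hu, div_nonneg ht hr.le]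

theorem map_add_le (hφ : IsOrliczFn φ) {u v t : ℝ} (hu : 0 ≤ u) (hv : 0 ≤ v) (ht : 0 < t) :
    φ (u + v) ≤ φ ((1 + t) * u) + φ ((1 + t) / t * v) := by
  have hlam : 1 / (1 + t) ≤ 1 := (div_le_one (by positivity)).2 (by linarith)
  have hconv := hφ.convexOn.2 (Set.mem_Ici.2 (by positivity : 0 ≤ (1 + t) * u))
    (Set.mem_Ici.2 (by positivity : 0 ≤ (1 + t) / t * v)) (by positivity)
    (sub_nonneg.2 hlam) (add_sub_cancel _ _)
  have harg : (1 / (1 + t)) • ((1 + t) * u) + (1 - 1 / (1 + t)) • ((1 + t) / t * v) = u + v := by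
    simp only [smul_eq_mul]; field_simp; ring
  rw [harg, smul_eq_mul, smul_eq_mul] at hconv
  have h₁ := mul_le_of_le_one_left (hφ.nonneg (by positivity : 0 ≤ (1 + t) * u)) hlam
  have h₂ := mul_le_of_le_one_left (hφ.nonneg (by positivity : 0 ≤ (1 + t) / t * v))
    (sub_le_self 1 (by positivity : 0 ≤ 1 / (1 + t)))
  linarith

theorem eventually_map_mul_le (hφ : IsOrliczFn φ) {L η : ℝ} (hL : 0 ≤ L) (hη : 0 < η) :
    ∀ᶠ δ in 𝓝[>] 0, ∀ u, 0 ≤ u → φ u ≤ δ → φ (L * u) ≤ η := by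
  have hcont : Tendsto (fun t => φ (L * t)) (𝓝[>] 0) (𝓝 0) := by
    have hmul : Tendsto (fun t : ℝ => L * t) (𝓝[>] 0) (𝓝[≥] 0) :=
      tendsto_nhdsWithin_of_tendsto_nhds_of_eventually_within _
        (by simpa using ((continuous_const_mul L).tendsto 0).mono_left nhdsWithin_le_nhds)
        (eventually_nhdsWithin_of_forall fun t ht => mul_nonneg hL (le_of_lt ht))
    simpa [Function.comp_def, hφ.map_zero] using
      (hφ.continuousOn 0 (Set.mem_Ici.2 le_rfl)).tendsto.comp hmul
  obtain ⟨t, hη', ht⟩ := ((hcont.eventually (gt_mem_nhds hη)).and self_mem_nhdsWithin).exists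
  filter_upwards [Ioo_mem_nhdsGT (hφ.pos t ht)] with δ hδ u hu hφu
  have hut : u ≤ t := by
    by_contra! h
    linarith [hφ.mono ht.le h.le, hδ.2]
  exact (hφ.mono (mul_nonneg hL hu) (mul_le_mul_of_nonneg_left hut hL)).trans hη'.le

end IsOrliczFn

theorem exists_le_two_pow (L : ℝ) : ∃ j : ℕ, L ≤ 2 ^ j :=
  (pow_unbounded_of_one_lt L one_lt_two).imp fun _ => le_of_lt

-- Junk value `0` when the series diverges, so summability is carried as a separate hypothesis.
noncomputable def modular (Φ : ℕ → ℝ → ℝ) (w : ℕ → ℝ) : ℝ := ∑' n, Φ n (w n)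

theorem rhoA_eq_modular {X : Type*} [NormedAddCommGroup X] (Φ : ℕ → ℝ → ℝ) (a : ℕ → ℕ → ℝ)
    (x : ℕ → X) : rhoA Φ a x = modular Φ (rowSum a x) := rfl

namespace IsMusielakOrlicz

variable {Φ : ℕ → ℝ → ℝ} {u w : ℕ → ℝ}

theorem summable_of_le (hΦ : IsMusielakOrlicz Φ) (hu : ∀ n, 0 ≤ u n) (huw : ∀ n, u n ≤ w n)
    (hw : Summable fun n => Φ n (w n)) : Summable fun n => Φ n (u n) :=
  hw.of_nonneg_of_le (fun n => (hΦ n).nonneg (hu n)) fun n => (hΦ n).mono (hu n) (huw n)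

theorem modular_le_of_le (hΦ : IsMusielakOrlicz Φ) (hu : ∀ n, 0 ≤ u n) (huw : ∀ n, u n ≤ w n)
    (hw : Summable fun n => Φ n (w n)) : modular Φ u ≤ modular Φ w :=
  (hΦ.summable_of_le hu huw hw).tsum_le_tsum (fun n => (hΦ n).mono (hu n) (huw n)) hw

theorem map_le_modular (hΦ : IsMusielakOrlicz Φ) (hw : ∀ n, 0 ≤ w n)
    (hs : Summable fun n => Φ n (w n)) (n : ℕ) : Φ n (w n) ≤ modular Φ w :=
  hs.le_tsum n fun m _ => (hΦ m).nonneg (hw m)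

theorem summable_two_mul (hΦ : IsMusielakOrlicz Φ) (hδ : MOCondDelta2 Φ) (hw : ∀ n, 0 ≤ w n)
    (hs : Summable fun n => Φ n (w n)) : Summable fun n => Φ n (2 * w n) := by
  obtain ⟨K, -, δ₀, hδ₀, c, -, hc, hdbl⟩ := hδ
  refine Summable.of_norm_bounded_eventually_nat ((hs.mul_left K).add hc) ?_
  filter_upwards [hs.tendsto_atTop_zero.eventually (ge_mem_nhds hδ₀)] with n hn
  rw [Real.norm_of_nonneg ((hΦ n).nonneg (by linarith [hw n]))]
  exact hdbl n (w n) (hw n) hn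

theorem summable_mul (hΦ : IsMusielakOrlicz Φ) (hδ : MOCondDelta2 Φ) {L : ℝ} (hL : 0 ≤ L)
    (hw : ∀ n, 0 ≤ w n) (hs : Summable fun n => Φ n (w n)) :
    Summable fun n => Φ n (L * w n) := by
  have hpow : ∀ j : ℕ, Summable fun n => Φ n (2 ^ j * w n) := by
    intro j
    induction j with
    | zero => simpa using hs
    | succ j ih =>
      simpa only [pow_succ', mul_assoc] using
        hΦ.summable_two_mul hδ (fun n => mul_nonneg (by positivity) (hw n)) ih
  obtain ⟨j, hj⟩ := exists_le_two_pow L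
  exact hΦ.summable_of_le (fun n => mul_nonneg hL (hw n))
    (fun n => mul_le_mul_of_nonneg_right hj (hw n)) (hpow j)

/-- The head `n < N` is handled by continuity of the finitely many `Φ n` at `0`, the tail by `δ₂`
with `N` chosen so that the tail of `c` is small. -/
theorem exists_modular_two_mul_le (hΦ : IsMusielakOrlicz Φ) (hδ : MOCondDelta2 Φ) {η : ℝ}
    (hη : 0 < η) :
    ∃ δ > 0, ∀ w : ℕ → ℝ, (∀ n, 0 ≤ w n) → (Summable fun n => Φ n (w n)) →
      modular Φ w ≤ δ → modular Φ (fun n => 2 * w n) ≤ η := by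
  obtain ⟨K, hK, δ₀, hδ₀, c, -, hc, hdbl⟩ := id hδ
  obtain ⟨N, hN⟩ : ∃ N, ∑' k, c (k + N) ≤ η / 3 :=
    ((tendsto_sum_nat_add c).eventually (ge_mem_nhds (by positivity))).exists
  set h := η / (3 * (N + 1))
  set e : ℕ → ℝ := fun n => if n < N then h else c n
  have he : Summable e := (summable_nat_add_iff N).1 <| ((summable_nat_add_iff N).2 hc).congr
    fun k => by simp [e]
  have hsum_e : ∑' n, e n ≤ 2 * η / 3 := by
    rw [← he.sum_add_tsum_nat_add N]
    have hhead : ∑ n ∈ Finset.range N, e n = N * h := by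
      rw [Finset.sum_congr rfl fun n hn => if_pos (Finset.mem_range.1 hn)]
      simp
    have htail : ∑' k, e (k + N) = ∑' k, c (k + N) := tsum_congr fun k => by simp [e]
    have hNh : N * h ≤ η / 3 := by
      rw [mul_div_assoc', div_le_div_iff₀ (by positivity) (by positivity)]
      nlinarith
    linarith
  have hheads := (Filter.eventually_all_finset (Finset.range N)).2 fun n _ =>
    (hΦ n).eventually_map_mul_le zero_le_two (by positivity : 0 < h)
  have hbounds : ∀ᶠ δ in 𝓝[>] 0, δ ≤ δ₀ ∧ δ ≤ η / (3 * K) :=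
    ((eventually_le_nhds hδ₀).and (eventually_le_nhds (by positivity))).filter_mono
      nhdsWithin_le_nhds
  obtain ⟨δ, ⟨hδhead, hδδ₀, hδK⟩, hδpos⟩ :=
    ((hheads.and hbounds).and self_mem_nhdsWithin).exists
  refine ⟨δ, hδpos, fun w hw hs hwδ => ?_⟩
  have hpt : ∀ n, Φ n (2 * w n) ≤ K * Φ n (w n) + e n := by
    intro n
    have hn : Φ n (w n) ≤ δ := (hΦ.map_le_modular hw hs n).trans hwδ
    by_cases hnN : n < N
    · simp only [e, if_pos hnN]
      nlinarith [hδhead n (Finset.mem_range.2 hnN) (w n) (hw n) hn, (hΦ n).nonneg (hw n)]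
    · simpa only [e, if_neg hnN] using hdbl n (w n) (hw n) (hn.trans hδδ₀)
  calc modular Φ (fun n => 2 * w n) ≤ ∑' n, (K * Φ n (w n) + e n) :=
        (hΦ.summable_two_mul hδ hw hs).tsum_le_tsum hpt ((hs.mul_left K).add he)
    _ = K * modular Φ w + ∑' n, e n := by rw [(hs.mul_left K).tsum_add he, tsum_mul_left]; rfl
    _ ≤ K * (η / (3 * K)) + 2 * η / 3 := by gcongr; exact hwδ.trans hδK
    _ = η := by field_simp; ring

theorem exists_modular_mul_le (hΦ : IsMusielakOrlicz Φ) (hδ : MOCondDelta2 Φ) {L : ℝ}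
    (hL : 0 ≤ L) {η : ℝ} (hη : 0 < η) :
    ∃ δ > 0, ∀ w : ℕ → ℝ, (∀ n, 0 ≤ w n) → (Summable fun n => Φ n (w n)) →
      modular Φ w ≤ δ → modular Φ (fun n => L * w n) ≤ η := by
  have hpow : ∀ j : ℕ, ∀ η > 0, ∃ δ > 0, ∀ w : ℕ → ℝ, (∀ n, 0 ≤ w n) →
      (Summable fun n => Φ n (w n)) → modular Φ w ≤ δ → modular Φ (fun n => 2 ^ j * w n) ≤ η := by
    intro j
    induction j with
    | zero => exact fun η hη => ⟨η, hη, fun w _ _ hwη => by simpa using hwη⟩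
    | succ j ih =>
      intro η hη
      obtain ⟨δ', hδ', hj⟩ := ih η hη
      obtain ⟨δ, hδpos, htwo⟩ := hΦ.exists_modular_two_mul_le hδ hδ'
      refine ⟨δ, hδpos, fun w hw hs hwδ => ?_⟩
      simpa only [pow_succ, mul_assoc] using hj (fun n => 2 * w n)
        (fun n => mul_nonneg zero_le_two (hw n)) (hΦ.summable_two_mul hδ hw hs) (htwo w hw hs hwδ)
  obtain ⟨j, hj⟩ := exists_le_two_pow L
  obtain ⟨δ, hδpos, hjδ⟩ := hpow j η hη
  refine ⟨δ, hδpos, fun w hw hs hwδ => le_trans ?_ (hjδ w hw hs hwδ)⟩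
  exact hΦ.modular_le_of_le (fun n => mul_nonneg hL (hw n))
    (fun n => mul_le_mul_of_nonneg_right hj (hw n)) (hΦ.summable_mul hδ (by positivity) hw hs)

/-- Where `Φ n (w n) ≤ δ₀`, convexity between `w n` and `2 * w n` together with `δ₂` bounds the
growth of `Φ n` on `[w n, (1 + t) * w n]`; elsewhere `Φ n (w n) ∈ (δ₀, d]`, and condition (*)
gives `Φ n ((1 + r) * w n) ≤ 1`, so convexity between `w n` and `(1 + r) * w n` bounds it. -/
theorem exists_modular_one_add_mul_le (hΦ : IsMusielakOrlicz Φ) (hδ : MOCondDelta2 Φ)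
    (hstar : MOCondStar Φ) {d : ℝ} (hd : d ∈ Set.Ioo 0 1) {ε : ℝ} (hε : 0 < ε) :
    ∃ t > 0, ∀ w : ℕ → ℝ, (∀ n, 0 ≤ w n) → (Summable fun n => Φ n (w n)) → modular Φ w ≤ d →
      (Summable fun n => Φ n ((1 + t) * w n)) ∧
        modular Φ (fun n => (1 + t) * w n) ≤ modular Φ w + ε := by
  obtain ⟨K, hK, δ₀, hδ₀, c, hc0, hc, hdbl⟩ := hδ
  obtain ⟨r, hr, hstar_r⟩ := hstar ((1 - d) / 2) ⟨by linarith [hd.2], by linarith [hd.1]⟩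
  set M := K + 1 / (r * δ₀)
  have hpt : ∀ t, 0 < t → t ≤ 1 → t ≤ r → ∀ n u, 0 ≤ u → Φ n u ≤ d →
      Φ n ((1 + t) * u) ≤ Φ n u + t * (M * Φ n u + c n) := by
    intro t ht ht1 htr n u hu hud
    have hφu := (hΦ n).nonneg hu
    have hKφc : 0 ≤ t * (K * Φ n u + c n) := by have := hc0 n; positivity
    by_cases hsmall : Φ n u ≤ δ₀
    · have hconv := (hΦ n).map_one_add_mul_le hu one_pos ht.le ht1
      rw [div_one, one_add_one_eq_two] at hconv
      have hdbl_t := mul_le_mul_of_nonneg_left (hdbl n u hu hsmall) ht.le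
      have : 0 ≤ t * (1 / (r * δ₀) * Φ n u) := by positivity
      nlinarith
    · have hconv := (hΦ n).map_one_add_mul_le hu hr ht.le htr
      have hbound : t / r * Φ n ((1 + r) * u) ≤ t * (1 / (r * δ₀) * Φ n u) :=
        calc t / r * Φ n ((1 + r) * u) ≤ t / r * 1 :=
              mul_le_mul_of_nonneg_left (hstar_r n u hu (by linarith [hd.2])) (by positivity)
          _ ≤ t / r * (Φ n u / δ₀) := by
              gcongr; rw [le_div_iff₀ hδ₀]; linarith
          _ = t * (1 / (r * δ₀) * Φ n u) := by ring
      nlinarith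
  set C := ∑' n, c n
  have hM : 0 ≤ M := by positivity
  have hC : 0 ≤ C := tsum_nonneg hc0
  have hMdC : 0 < M * d + C + 1 := by have := hd.1; positivity
  set t := min (min 1 r) (ε / (M * d + C + 1))
  have ht : 0 < t := lt_min (lt_min one_pos hr) (by positivity)
  have htε : t * (M * d + C) ≤ ε := by
    have h : t ≤ ε / (M * d + C + 1) := min_le_right _ _
    rw [le_div_iff₀ hMdC] at h
    nlinarith
  refine ⟨t, ht, fun w hw hs hwd => ?_⟩
  have hptw : ∀ n, Φ n ((1 + t) * w n) ≤ Φ n (w n) + t * (M * Φ n (w n) + c n) := fun n =>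
    hpt t ht ((min_le_left _ _).trans (min_le_left _ _))
      ((min_le_left _ _).trans (min_le_right _ _)) n (w n) (hw n)
      ((hΦ.map_le_modular hw hs n).trans hwd)
  have hmaj : Summable fun n => Φ n (w n) + t * (M * Φ n (w n) + c n) :=
    hs.add (((hs.mul_left M).add hc).mul_left t)
  have hst : Summable fun n => Φ n ((1 + t) * w n) :=
    hmaj.of_nonneg_of_le (fun n => (hΦ n).nonneg (by have := hw n; positivity)) hptw
  refine ⟨hst, ?_⟩
  calc modular Φ (fun n => (1 + t) * w n)
      ≤ ∑' n, (Φ n (w n) + t * (M * Φ n (w n) + c n)) := hst.tsum_le_tsum hptw hmaj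
    _ = modular Φ w + t * (M * modular Φ w + C) := by
      rw [hs.tsum_add (((hs.mul_left M).add hc).mul_left t), tsum_mul_left,
        (hs.mul_left M).tsum_add hc, tsum_mul_left]
      rfl
    _ ≤ modular Φ w + t * (M * d + C) := by gcongr
    _ ≤ modular Φ w + ε := by linarith

theorem exists_modular_le_add (hΦ : IsMusielakOrlicz Φ) (hδ : MOCondDelta2 Φ)
    (hstar : MOCondStar Φ) {d : ℝ} (hd : d ∈ Set.Ioo 0 1) {ε : ℝ} (hε : 0 < ε) :
    ∃ δ > 0, ∀ u v w : ℕ → ℝ, (∀ n, 0 ≤ u n) → (∀ n, 0 ≤ v n) → (∀ n, 0 ≤ w n) →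
      (∀ n, w n ≤ u n + v n) → (Summable fun n => Φ n (u n)) →
      (Summable fun n => Φ n (v n)) → modular Φ u ≤ d → modular Φ v ≤ δ →
      (Summable fun n => Φ n (w n)) ∧ modular Φ w ≤ modular Φ u + ε := by
  obtain ⟨t, ht, hgrowth⟩ := hΦ.exists_modular_one_add_mul_le hδ hstar hd (half_pos hε)
  have hL : 0 ≤ (1 + t) / t := by positivity
  obtain ⟨δ, hδpos, hsmall⟩ := hΦ.exists_modular_mul_le hδ hL (half_pos hε)
  refine ⟨δ, hδpos, fun u v w hu hv hw hwuv hsu hsv hud hvδ => ?_⟩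
  obtain ⟨hsu', hu'⟩ := hgrowth u hu hsu hud
  have hsv' := hΦ.summable_mul hδ hL hv hsv
  have hpt : ∀ n, Φ n (w n) ≤ Φ n ((1 + t) * u n) + Φ n ((1 + t) / t * v n) := fun n =>
    ((hΦ n).mono (hw n) (hwuv n)).trans ((hΦ n).map_add_le (hu n) (hv n) ht)
  have hsw := (hsu'.add hsv').of_nonneg_of_le (fun n => (hΦ n).nonneg (hw n)) hpt
  refine ⟨hsw, ?_⟩
  calc modular Φ w
      ≤ modular Φ (fun n => (1 + t) * u n) + modular Φ (fun n => (1 + t) / t * v n) := by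
        rw [modular, modular, modular, ← hsu'.tsum_add hsv']
        exact hsw.tsum_le_tsum hpt (hsu'.add hsv')
    _ ≤ modular Φ u + ε / 2 + ε / 2 := add_le_add hu' (hsmall v hv hsv hvδ)
    _ = modular Φ u + ε := by ring

end IsMusielakOrlicz

section RowSum

variable {X : Type*} [NormedAddCommGroup X] {a : ℕ → ℕ → ℝ} {x y z : ℕ → X} {n : ℕ}

theorem rowSum_nonneg (a : ℕ → ℕ → ℝ) (x : ℕ → X) (n : ℕ) : 0 ≤ rowSum a x n :=
  tsum_nonneg fun _ => by positivity

theorem summable_row_of_norm_le (hz : ∀ k, ‖z k‖ ≤ ‖x k‖ + ‖y k‖)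
    (hx : Summable fun k => |a n k| * ‖x k‖) (hy : Summable fun k => |a n k| * ‖y k‖) :
    Summable fun k => |a n k| * ‖z k‖ :=
  (hx.add hy).of_nonneg_of_le (fun _ => by positivity) fun k => by
    rw [← mul_add]; exact mul_le_mul_of_nonneg_left (hz k) (abs_nonneg _)

theorem rowSum_le_add (hz : ∀ k, ‖z k‖ ≤ ‖x k‖ + ‖y k‖)
    (hx : Summable fun k => |a n k| * ‖x k‖) (hy : Summable fun k => |a n k| * ‖y k‖) :
    rowSum a z n ≤ rowSum a x n + rowSum a y n := by
  rw [rowSum, rowSum, rowSum, ← hx.tsum_add hy]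
  exact (summable_row_of_norm_le hz hx hy).tsum_le_tsum
    (fun k => by rw [← mul_add]; exact mul_le_mul_of_nonneg_left (hz k) (abs_nonneg _))
    (hx.add hy)

theorem MemL.summable_modular {Φ : ℕ → ℝ → ℝ} (hΦ : IsMusielakOrlicz Φ) (hδ : MOCondDelta2 Φ)
    (hx : MemL Φ a x) : Summable fun n => Φ n (rowSum a x n) := by
  obtain ⟨-, -, σ, hσ, hs⟩ := hx
  simpa only [mul_div_cancel₀ _ hσ.ne'] using
    hΦ.summable_mul hδ hσ.le (fun n => div_nonneg (rowSum_nonneg a x n) hσ.le) hs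

end RowSum

theorem modular_almost_uniform_continuity_general
    {X : Type*} [NormedAddCommGroup X]
    (Φ : ℕ → ℝ → ℝ) (hΦ : IsMusielakOrlicz Φ) (hδ : MOCondDelta2 Φ)
    (hstar : MOCondStar Φ)
    (a : ℕ → ℕ → ℝ) :
    ∀ d : ℝ, d ∈ Set.Ioo (0 : ℝ) 1 → ∀ ε > (0 : ℝ), ∃ δ > (0 : ℝ),
      ∀ x y : ℕ → X, MemL Φ a x → MemL Φ a y →
        rhoA Φ a x ≤ d → rhoA Φ a y ≤ δ →
        |rhoA Φ a (x + y) - rhoA Φ a x| < ε := by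
  intro d hd ε hε
  set ε' := min (ε / 2) ((1 - d) / 2)
  have hε' : 0 < ε' := lt_min (half_pos hε) (by linarith [hd.2])
  have hd' : d + ε' ∈ Set.Ioo 0 1 :=
    ⟨by linarith [hd.1], by linarith [hd.2, min_le_right (ε / 2) ((1 - d) / 2)]⟩
  obtain ⟨δ₁, hδ₁, hupper⟩ := hΦ.exists_modular_le_add hδ hstar hd hε'
  obtain ⟨δ₂, hδ₂, hlower⟩ := hΦ.exists_modular_le_add hδ hstar hd' hε'
  refine ⟨min δ₁ δ₂, lt_min hδ₁ hδ₂, fun x y hx hy hρx hρy => ?_⟩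
  simp only [rhoA_eq_modular] at hρx hρy ⊢
  have hxy_le n := rowSum_le_add (fun k => norm_add_le (x k) (y k)) (hx.2.1 n) (hy.2.1 n)
  obtain ⟨hsxy, hρxy⟩ := hupper _ _ _ (rowSum_nonneg a x) (rowSum_nonneg a y)
    (rowSum_nonneg a (x + y)) hxy_le (hx.summable_modular hΦ hδ) (hy.summable_modular hΦ hδ) hρx
    (hρy.trans (min_le_left _ _))
  have hx_le n := rowSum_le_add (fun k => norm_le_add_norm_add (x k) (y k))
    (summable_row_of_norm_le (fun k => norm_add_le (x k) (y k)) (hx.2.1 n) (hy.2.1 n)) (hy.2.1 n)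
  obtain ⟨-, hρx'⟩ := hlower _ _ _ (rowSum_nonneg a (x + y)) (rowSum_nonneg a y)
    (rowSum_nonneg a x) hx_le hsxy (hy.summable_modular hΦ hδ) (by linarith)
    (hρy.trans (min_le_right _ _))
  rw [abs_sub_lt_iff]
  constructor <;> linarith [min_le_left (ε / 2) ((1 - d) / 2)]

/-- for `A ∈ 𝒜`, `Φ ∈ δ₂` satisfying condition (*): for each
`d ∈ (0,1)` and `ε > 0` there is `δ > 0` such that `ρ_Φ^A(x̄) ≤ d` and
`ρ_Φ^A(ȳ) ≤ δ` imply `|ρ_Φ^A(x̄+ȳ) - ρ_Φ^A(x̄)| < ε`. -/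
theorem modular_almost_uniform_continuity
    {X : Type*} [NormedAddCommGroup X] [NormedSpace ℝ X] [CompleteSpace X]
    (Φ : ℕ → ℝ → ℝ) (hΦ : IsMusielakOrlicz Φ) (hδ : MOCondDelta2 Φ)
    (hstar : MOCondStar Φ)
    (a : ℕ → ℕ → ℝ) (hA : MatrixClassA a) :
    ∀ d : ℝ, d ∈ Set.Ioo (0 : ℝ) 1 → ∀ ε > (0 : ℝ), ∃ δ > (0 : ℝ),
      ∀ x y : ℕ → X, MemL Φ a x → MemL Φ a y →
        rhoA Φ a x ≤ d → rhoA Φ a y ≤ δ →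
        |rhoA Φ a (x + y) - rhoA Φ a x| < ε :=
  modular_almost_uniform_continuity_general Φ hΦ hδ hstar a
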